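/- arXiv:2303.01957 — 6 statements merged into one kernel-verified Lean document; each statement's English description precedes it below -/
import Mathlib

section
/- For every integer q ≥ 2 and every positive integer m, the product ∏_{i=1}^{m} (q^{i+1} - (-1)^{i+1}) is strictly less than q^{∑_{i=1}^{m}(i+1)}. -/
theorem stmt_1 (q : ℤ) (m : ℕ) (hq : 2 ≤ q) (hm : 1 ≤ m) :
    (∏ i ∈ Finset.Icc 1 m, (q ^ (i + 1) - (-1 : ℤ) ^ (i + 1))) <
      q ^ (∑ i ∈ Finset.Icc 1 m, (i + 1)) := by
  have hq1 : (1:ℤ) ≤ q := by linarith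
  have hpos : ∀ i : ℕ, (0:ℤ) < q ^ (i + 1) - (-1:ℤ) ^ (i + 1) := by
    intro i
    have h2 : (2:ℤ) ≤ q ^ (i + 1) := le_trans hq (le_self_pow₀ hq1 (by omega))
    rcases neg_one_pow_eq_or ℤ (i+1) with h | h <;> rw [h] <;> linarith
  have hf : ∀ i : ℕ, q ^ (i + 1) - (-1:ℤ) ^ (i + 1) ≤ q ^ (i + 1) + 1 := by
    intro i
    rcases neg_one_pow_eq_or ℤ (i+1) with h | h <;> rw [h] <;> linarith
  have key : ∀ k : ℕ,
      (∏ i ∈ Finset.Icc 1 (k+1), (q ^ (i + 1) - (-1 : ℤ) ^ (i + 1))) ≤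
        q ^ (∑ i ∈ Finset.Icc 1 (k+1), (i + 1)) - q ^ (∑ i ∈ Finset.Icc 1 k, (i + 1)) := by
    intro k
    induction k with
    | zero => simp
    | succ k ih =>
      rw [Finset.prod_Icc_succ_top (by omega : 1 ≤ k + 1 + 1),
        Finset.sum_Icc_succ_top (by omega : 1 ≤ k + 1 + 1)]
      set S := ∑ i ∈ Finset.Icc 1 (k+1), (i + 1) with hS
      have hSsplit : S = (∑ i ∈ Finset.Icc 1 k, (i + 1)) + (k + 2) := by
        rw [hS, Finset.sum_Icc_succ_top (by omega : 1 ≤ k + 1)]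
      set B := q ^ (∑ i ∈ Finset.Icc 1 k, (i + 1)) with hB
      have hA : q ^ S = B * q ^ (k + 2) := by rw [hSsplit, pow_add]
      have hB1 : (1:ℤ) ≤ B := one_le_pow₀ hq1
      have hq2 : (1:ℤ) ≤ q ^ (k + 2) := one_le_pow₀ hq1
      have hq3 : q ^ (k + 1 + 1 + 1) = q * q ^ (k + 2) := by ring
      have hAB : (0:ℤ) ≤ q ^ S - B := by nlinarith
      have hP : (0:ℤ) ≤ ∏ i ∈ Finset.Icc 1 (k+1), (q ^ (i + 1) - (-1 : ℤ) ^ (i + 1)) :=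
        le_of_lt (Finset.prod_pos fun i _ => hpos i)
      calc (∏ i ∈ Finset.Icc 1 (k+1), (q ^ (i + 1) - (-1 : ℤ) ^ (i + 1))) *
            (q ^ (k + 1 + 1 + 1) - (-1 : ℤ) ^ (k + 1 + 1 + 1))
          ≤ (q ^ S - B) * (q ^ (k + 1 + 1 + 1) + 1) :=
            mul_le_mul ih (hf (k + 1 + 1)) (le_of_lt (hpos _)) hAB
        _ ≤ q ^ (S + (k + 1 + 1 + 1)) - q ^ S := by
            rw [pow_add q S (k + 1 + 1 + 1), hA]; nlinarith
  obtain ⟨k, rfl⟩ : ∃ k, m = k + 1 := ⟨m - 1, by omega⟩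
  have hB0 : (0:ℤ) < q ^ (∑ i ∈ Finset.Icc 1 k, (i + 1)) := pow_pos (by linarith) _
  linarith [key k]
end

section
/- Let m ≥ 5 and let k be the integer satisfying k!/2 ≤ √(m!/2) < (k+1)!/2. Then k > m/2. -/
lemma fac_sq_le : ∀ k : ℕ, (Nat.factorial (k+1))^2 ≤ 2 * Nat.factorial (2*k) := by
  intro k
  induction k with
  | zero => simp [Nat.factorial]
  | succ n ih =>
    rcases n with _ | p
    · decide
    set n := p + 1 with hn
    have h1 : Nat.factorial (n+2) ^ 2 = (n+2)^2 * Nat.factorial (n+1)^2 := by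
      rw [Nat.factorial_succ]; ring
    have h2 : 2 * (n+1) = (2*n) + 2 := by ring
    have h3 : Nat.factorial (2*(n+1)) = (2*n+2) * ((2*n+1) * Nat.factorial (2*n)) := by
      rw [h2, Nat.factorial_succ, Nat.factorial_succ]
    have hk : (n+2)^2 ≤ (2*n+2) * (2*n+1) := by
      have : 1 ≤ n := by omega
      nlinarith
    calc Nat.factorial (n+2)^2 = (n+2)^2 * Nat.factorial (n+1)^2 := h1
      _ ≤ ((2*n+2)*(2*n+1)) * (2 * Nat.factorial (2*n)) := by
          exact Nat.mul_le_mul hk ih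
      _ = 2 * Nat.factorial (2*(n+1)) := by rw [h3]; ring

theorem stmt_6 (m k : ℕ) (hm : 5 ≤ m)
    (h1 : ((Nat.factorial k : ℝ) / 2) ≤ Real.sqrt ((Nat.factorial m : ℝ) / 2))
    (h2 : Real.sqrt ((Nat.factorial m : ℝ) / 2) < (Nat.factorial (k + 1) : ℝ) / 2) :
    (m : ℝ) / 2 < k := by
  by_contra h
  push_neg at h
  have h2k : 2 * k ≤ m := by
    have : (2 * k : ℝ) ≤ m := by push_cast; linarith
    exact_mod_cast this
  have hnat : (Nat.factorial (k+1))^2 ≤ 2 * Nat.factorial m :=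
    le_trans (fac_sq_le k) (by
      exact Nat.mul_le_mul_left 2 (Nat.factorial_le h2k))
  have hreal : ((Nat.factorial (k+1) : ℝ))^2 ≤ 2 * (Nat.factorial m : ℝ) := by
    exact_mod_cast hnat
  have hle : ((Nat.factorial (k+1) : ℝ) / 2) ≤ Real.sqrt ((Nat.factorial m : ℝ) / 2) := by
    rw [Real.le_sqrt (by positivity)]
    · rw [div_pow, div_le_div_iff₀ (by norm_num) (by norm_num)]
      nlinarith
    · positivity
  linarith
end

section
/- For every alternating group A_m with m ≥ 5, there exist subgroups H₂ ≤ H₁ ≤ A_m with |H₂|² ≤ |A_m|, [A_m : H₁]² ≤ |A_m|, and [H₁ : H₂]² ≤ |A_m|. -/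
/-!
Realise `A_b` inside `A_m` as the even permutations fixing every point `≥ b`; by multiple
transitivity of `A_m` its index is `m!/b!`. Take `H₁ = A_{m-1}`, of index `m` with `m² ≤ m!/2` for
`m ≥ 5`; take `H₂ = A_b` with `b ≤ m - 1` largest such that `|A_b|² ≤ |A_m|`. Maximality of `b`
(or `b = m - 1`) gives `|A_m| ≤ (m |A_b|)² = (|H₂| [A_m : H₁])²`, and as
`[H₁ : H₂] · (|H₂| [A_m : H₁]) = |A_m|`, this forces `[H₁ : H₂]² ≤ |A_m|`.
-/

open Nat MulAction

theorem Subgroup.relIndex_sq_le_card {G : Type*} [Group G] [Finite G] {H K : Subgroup G}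
    (hKH : K ≤ H) (hG : Nat.card G ≤ (Nat.card K * H.index) ^ 2) :
    K.relIndex H ^ 2 ≤ Nat.card G := by
  have hprod : K.relIndex H * (Nat.card K * H.index) = Nat.card G := by
    rw [mul_left_comm, Subgroup.relIndex_mul_index hKH, Subgroup.card_mul_index]
  have hpos : 0 < Nat.card G := Nat.card_pos
  nlinarith

theorem two_mul_sq_le_factorial {n : ℕ} (h : 5 ≤ n) : 2 * n ^ 2 ≤ n ! := by
  induction n, h using Nat.le_induction with
  | base => decide
  | succ k _ ih =>
    rw [Nat.factorial_succ]
    nlinarith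

theorem exists_factorial_sq_le_two_mul_factorial_le_sq {m : ℕ} (hm : 3 ≤ m) :
    ∃ b, 2 ≤ b ∧ b < m ∧ b ! ^ 2 ≤ 2 * m ! ∧ 2 * m ! ≤ (m * b !) ^ 2 := by
  set P : ℕ → Prop := fun k => k ! ^ 2 ≤ 2 * (m)!
  have hm2 : 2 ≤ (m)! := Nat.factorial_le (m := 2) (by omega)
  have hP2 : P 2 := by simp only [P, Nat.factorial_two]; omega
  set b := Nat.findGreatest P (m - 1)
  have hb2 : 2 ≤ b := Nat.le_findGreatest (by omega) hP2
  have hbm : b ≤ m - 1 := Nat.findGreatest_le _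
  refine ⟨b, hb2, by omega, Nat.findGreatest_spec (m := 2) (by omega) hP2, ?_⟩
  rcases Nat.lt_or_ge b (m - 1) with hb | hb
  · have hnext : ¬P (b + 1) := Nat.findGreatest_is_greatest (n := m - 1) (by omega) (by omega)
    calc 2 * m ! ≤ (b + 1)! ^ 2 := (not_le.mp hnext).le
      _ = ((b + 1) * b !) ^ 2 := by rw [Nat.factorial_succ]
      _ ≤ (m * b !) ^ 2 := by gcongr; omega
  · rw [show b = m - 1 by omega, Nat.mul_factorial_pred (by omega)]
    nlinarith

theorem ncard_setOf_le_val {m b : ℕ} (hbm : b ≤ m) : {i : Fin m | b ≤ (i : ℕ)}.ncard = m - b := by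
  have hcompl : {i : Fin m | b ≤ (i : ℕ)} = {i : Fin m | (i : ℕ) < b}ᶜ := by ext; simp
  rw [hcompl, Set.ncard_compl, Nat.card_eq_fintype_card, Fintype.card_fin,
    Set.ncard_eq_toFinset_card', Set.toFinset_ofPred, Fin.card_filter_val_lt, min_eq_right hbm]

abbrev alternatingGroupBelow (m b : ℕ) : Subgroup (alternatingGroup (Fin m)) :=
  fixingSubgroup (alternatingGroup (Fin m)) {i : Fin m | b ≤ (i : ℕ)}

theorem alternatingGroupBelow_mono (m : ℕ) : Monotone (alternatingGroupBelow m) :=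
  fun _ _ hbb' => fixingSubgroup_antitone _ _ fun _ (hi : _ ≤ _) => hbb'.trans hi

theorem index_alternatingGroupBelow_mul_factorial {m b : ℕ} (hb : 2 ≤ b) (hbm : b ≤ m) :
    (alternatingGroupBelow m b).index * b ! = m ! := by
  have htrans : IsMultiplyPretransitive (alternatingGroup (Fin m)) (Fin m) (m - b) := by
    have := alternatingGroup.isMultiplyPretransitive (Fin m)
    rw [Nat.card_fin] at this
    exact isMultiplyPretransitive_of_le (n := m - 2) (by omega) (by simp)
  have := htrans.index_of_fixingSubgroup_mul (ncard_setOf_le_val hbm)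
  rwa [Nat.card_fin, Nat.sub_sub_self hbm] at this

theorem two_mul_card_alternatingGroup_fin {m : ℕ} (hm : 2 ≤ m) :
    2 * Nat.card (alternatingGroup (Fin m)) = m ! := by
  have : Nontrivial (Fin m) := Fin.nontrivial_iff_two_le.mpr hm
  rw [Nat.card_eq_fintype_card, two_mul_card_alternatingGroup, Fintype.card_perm, Fintype.card_fin]

theorem two_mul_card_alternatingGroupBelow {m b : ℕ} (hb : 2 ≤ b) (hbm : b ≤ m) :
    2 * Nat.card (alternatingGroupBelow m b) = b ! := by
  have hidx := index_alternatingGroupBelow_mul_factorial hb hbm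
  have hcard := (alternatingGroupBelow m b).card_mul_index
  have hA := two_mul_card_alternatingGroup_fin (hb.trans hbm)
  have hpos : 0 < (alternatingGroupBelow m b).index :=
    Nat.pos_of_ne_zero Subgroup.index_ne_zero_of_finite
  refine Nat.eq_of_mul_eq_mul_right hpos ?_
  rw [mul_assoc, hcard, hA, mul_comm, hidx]

theorem stmt_8 (m : ℕ) (hm : 5 ≤ m) :
    ∃ H₁ H₂ : Subgroup (alternatingGroup (Fin m)), H₂ ≤ H₁ ∧
      (Nat.card H₂) ^ 2 ≤ Nat.card (alternatingGroup (Fin m)) ∧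
      H₁.index ^ 2 ≤ Nat.card (alternatingGroup (Fin m)) ∧
      (H₂.relIndex H₁) ^ 2 ≤ Nat.card (alternatingGroup (Fin m)) := by
  obtain ⟨b, hb2, hbm, hb_le, hb_ge⟩ :=
    exists_factorial_sq_le_two_mul_factorial_le_sq (m := m) (by omega)
  have hA := two_mul_card_alternatingGroup_fin (m := m) (by omega)
  have hH₂ := two_mul_card_alternatingGroupBelow hb2 hbm.le
  have hindex : (alternatingGroupBelow m (m - 1)).index = m := by
    have h := index_alternatingGroupBelow_mul_factorial (m := m) (b := m - 1) (by omega) (by omega)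
    rw [← Nat.mul_factorial_pred (n := m) (by omega)] at h
    exact Nat.eq_of_mul_eq_mul_right (Nat.factorial_pos _) h
  refine ⟨alternatingGroupBelow m (m - 1), alternatingGroupBelow m b,
    alternatingGroupBelow_mono m (by omega), by nlinarith, ?_, ?_⟩
  · rw [hindex]
    nlinarith [two_mul_sq_le_factorial hm]
  · refine Subgroup.relIndex_sq_le_card (alternatingGroupBelow_mono m (by omega)) ?_
    rw [hindex]
    rw [← hA, ← hH₂] at hb_ge
    nlinarith
end

section
/- For all integers m ≥ 1 and q > 2, if |H₂| = q^{m(m+1)/2} and |H₁| = q^{m(m+1)/2}·(q-1)^m / d where d = gcd(q-1, m+1), then (|H₁|/|H₂|)² < |H₁|, i.e., ((q-1)^m / d)² < q^{m(m+1)/2}·(q-1)^m / d. -/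
theorem stmt_9 (m q : ℕ) (hm : 1 ≤ m) (hq : 2 < q) (d : ℕ)
    (hd : d = Nat.gcd (q - 1) (m + 1)) :
    ((((q : ℚ) - 1) ^ m / d) ^ 2) < (q : ℚ) ^ (m * (m + 1) / 2) * ((q : ℚ) - 1) ^ m / d := by
  have hdpos : 0 < d := by
    rw [hd]; exact Nat.gcd_pos_of_pos_right _ (Nat.succ_pos m)
  have hdq : (1 : ℚ) ≤ d := by exact_mod_cast hdpos
  have hq1 : (1 : ℚ) < (q : ℚ) - 1 := by
    have : (3 : ℚ) ≤ q := by exact_mod_cast hq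
    linarith
  have hpos : 0 < ((q : ℚ) - 1) ^ m := by positivity
  have hme : m ≤ m * (m + 1) / 2 := by
    rw [Nat.le_div_iff_mul_le two_pos]
    exact Nat.mul_le_mul_left m (by omega)
  have key : ((q : ℚ) - 1) ^ m / d < (q : ℚ) ^ (m * (m + 1) / 2) := by
    calc ((q : ℚ) - 1) ^ m / d ≤ ((q : ℚ) - 1) ^ m := div_le_self hpos.le hdq
      _ < (q : ℚ) ^ m := by
          apply pow_lt_pow_left₀ (by linarith) (by linarith) (by omega)
      _ ≤ (q : ℚ) ^ (m * (m + 1) / 2) := by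
          apply pow_le_pow_right₀ (by linarith) hme
  have hfac : 0 < ((q : ℚ) - 1) ^ m / d := by positivity
  calc ((((q : ℚ) - 1) ^ m / d)) ^ 2 = (((q : ℚ) - 1) ^ m / d) * (((q : ℚ) - 1) ^ m / d) := sq _
    _ < (q : ℚ) ^ (m * (m + 1) / 2) * (((q : ℚ) - 1) ^ m / d) :=
        mul_lt_mul_of_pos_right key hfac
    _ = (q : ℚ) ^ (m * (m + 1) / 2) * ((q : ℚ) - 1) ^ m / d := by ring
end

section
/- For all integers m ≥ 1 and q > 2, with n = q^{m(m+1)/2}·∏_{i=1}^{m}(q^{i+1}-1)/gcd(q-1,m+1) and b = q^{m(m+1)/2}·(q-1)^m/gcd(q-1,m+1), one has n/b² < 3, and hence (n/b)² < 3n. -/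
lemma stmt_10_nat_aux : ∀ m : ℕ, 1 ≤ m → 3 ^ m * (m + 1) ≤ 3 * 4 ^ m := by
  intro m hm
  induction m with
  | zero => omega
  | succ k ih =>
    rcases Nat.eq_or_lt_of_le hm with h | h
    · rw [← h]; norm_num
    · have hk : 1 ≤ k := by omega
      have ihk := ih hk
      have h34 : 3 ^ k ≤ 4 ^ k := Nat.pow_le_pow_left (by norm_num) k
      calc 3 ^ (k + 1) * (k + 1 + 1) = 3 * (3 ^ k * (k + 1)) + 3 * 3 ^ k := by ring
        _ ≤ 3 * (3 * 4 ^ k) + 3 * 4 ^ k := by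
            exact Nat.add_le_add (Nat.mul_le_mul_left 3 ihk) (Nat.mul_le_mul_left 3 h34)
        _ = 3 * 4 ^ (k + 1) := by ring

lemma stmt_10_sum_Icc (m : ℕ) : 2 * ∑ i ∈ Finset.Icc 1 m, i = m * (m + 1) := by
  induction m with
  | zero => simp
  | succ k ih =>
    rw [Finset.sum_Icc_succ_top (by omega), mul_add, ih]
    ring

theorem stmt_10 (m q : ℕ) (hm : 1 ≤ m) (hq : 2 < q) (n b : ℚ)
    (hn : n = (q : ℚ) ^ (m * (m + 1) / 2) *
      (∏ i ∈ Finset.Icc 1 m, ((q : ℚ) ^ (i + 1) - 1)) / (Nat.gcd (q - 1) (m + 1)))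
    (hb : b = (q : ℚ) ^ (m * (m + 1) / 2) * ((q : ℚ) - 1) ^ m / (Nat.gcd (q - 1) (m + 1))) :
    n / b ^ 2 < 3 ∧ (n / b) ^ 2 < 3 * n := by
  have hq3 : (3 : ℚ) ≤ (q : ℚ) := by exact_mod_cast hq
  have hq1 : (0 : ℚ) < (q : ℚ) - 1 := by linarith
  set d : ℚ := (Nat.gcd (q - 1) (m + 1) : ℚ) with hd
  set Q : ℚ := (q : ℚ) ^ (m * (m + 1) / 2) with hQdef
  set P : ℚ := ∏ i ∈ Finset.Icc 1 m, ((q : ℚ) ^ (i + 1) - 1) with hPdef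
  have hQ0 : 0 < Q := pow_pos (by linarith) _
  have hP0 : 0 < P := by
    apply Finset.prod_pos
    intro i hi
    have : (1 : ℚ) < (q : ℚ) ^ (i + 1) := one_lt_pow₀ (by linarith) (by omega)
    linarith
  have hgcdpos : 0 < Nat.gcd (q - 1) (m + 1) := Nat.gcd_pos_of_pos_right _ (by omega)
  have hd0 : 0 < d := by rw [hd]; exact_mod_cast hgcdpos
  have hdle : d ≤ (m : ℚ) + 1 := by
    have h := Nat.le_of_dvd (by omega) (Nat.gcd_dvd_right (q - 1) (m + 1))
    rw [hd]
    exact_mod_cast h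
  have hprodq : ∏ i ∈ Finset.Icc 1 m, (q : ℚ) ^ i = Q := by
    rw [Finset.prod_pow_eq_pow_sum, hQdef]
    congr 1
    have h2 := stmt_10_sum_Icc m
    omega
  have hcard : (Finset.Icc 1 m).card = m := by simp
  have hprodlt : ∏ i ∈ Finset.Icc 1 m, (4 * ((q : ℚ) ^ (i + 1) - 1))
      < ∏ i ∈ Finset.Icc 1 m, (3 * ((q : ℚ) ^ i * ((q : ℚ) - 1) ^ 2)) := by
    apply Finset.prod_lt_prod_of_nonempty
    · intro i hi
      have : (1 : ℚ) < (q : ℚ) ^ (i + 1) := one_lt_pow₀ (by linarith) (by omega)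
      linarith
    · intro i hi
      have hpow : (0 : ℚ) < (q : ℚ) ^ i := pow_pos (by linarith) _
      have h1 : 4 * (q : ℚ) ≤ 3 * ((q : ℚ) - 1) ^ 2 := by nlinarith
      have h2 : (q : ℚ) ^ (i + 1) = (q : ℚ) ^ i * q := pow_succ _ _
      nlinarith [mul_le_mul_of_nonneg_left h1 hpow.le]
    · exact Finset.nonempty_Icc.mpr hm
  have hL : ∏ i ∈ Finset.Icc 1 m, (4 * ((q : ℚ) ^ (i + 1) - 1)) = 4 ^ m * P := by
    rw [Finset.prod_mul_distrib, Finset.prod_const, hcard, hPdef]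
  have hR : ∏ i ∈ Finset.Icc 1 m, (3 * ((q : ℚ) ^ i * ((q : ℚ) - 1) ^ 2))
      = 3 ^ m * (Q * (((q : ℚ) - 1) ^ 2) ^ m) := by
    rw [Finset.prod_mul_distrib, Finset.prod_mul_distrib, Finset.prod_const,
      Finset.prod_const, hcard, hprodq]
  have hkey0 : 4 ^ m * P < 3 ^ m * (Q * (((q : ℚ) - 1) ^ 2) ^ m) := by
    rw [← hL, ← hR]; exact hprodlt
  have haux : (3 : ℚ) ^ m * ((m : ℚ) + 1) ≤ 3 * 4 ^ m := by
    exact_mod_cast stmt_10_nat_aux m hm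
  have hm1 : (0 : ℚ) < (m : ℚ) + 1 := by positivity
  have hY0 : (0 : ℚ) < (((q : ℚ) - 1) ^ 2) ^ m := pow_pos (pow_pos hq1 2) m
  have hkey : P * d < 3 * (Q * (((q : ℚ) - 1) ^ m) ^ 2) := by
    have e : (((q : ℚ) - 1) ^ m) ^ 2 = (((q : ℚ) - 1) ^ 2) ^ m := by rw [← pow_mul, ← pow_mul, mul_comm]
    rw [e]
    have c : 4 ^ m * (P * d) < 4 ^ m * (3 * (Q * (((q : ℚ) - 1) ^ 2) ^ m)) := by
      calc 4 ^ m * (P * d) ≤ 4 ^ m * (P * ((m : ℚ) + 1)) := by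
            apply mul_le_mul_of_nonneg_left (mul_le_mul_of_nonneg_left hdle hP0.le)
            positivity
        _ = (4 ^ m * P) * ((m : ℚ) + 1) := by ring
        _ < (3 ^ m * (Q * (((q : ℚ) - 1) ^ 2) ^ m)) * ((m : ℚ) + 1) :=
            mul_lt_mul_of_pos_right hkey0 hm1
        _ = (3 ^ m * ((m : ℚ) + 1)) * (Q * (((q : ℚ) - 1) ^ 2) ^ m) := by ring
        _ ≤ (3 * 4 ^ m) * (Q * (((q : ℚ) - 1) ^ 2) ^ m) := by
            apply mul_le_mul_of_nonneg_right haux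
            positivity
        _ = 4 ^ m * (3 * (Q * (((q : ℚ) - 1) ^ 2) ^ m)) := by ring
    exact lt_of_mul_lt_mul_left c (by positivity)
  have hd' : d ≠ 0 := ne_of_gt hd0
  have hQ' : Q ≠ 0 := ne_of_gt hQ0
  have hq1' : (q : ℚ) - 1 ≠ 0 := ne_of_gt hq1
  have hb0 : 0 < b := by
    rw [hb]; exact div_pos (mul_pos hQ0 (pow_pos hq1 m)) hd0
  have hn0 : 0 < n := by
    rw [hn]; exact div_pos (mul_pos hQ0 hP0) hd0
  have hnb : n / b ^ 2 = P * d / (Q * (((q : ℚ) - 1) ^ m) ^ 2) := by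
    rw [hn, hb]
    field_simp
  have goal1 : n / b ^ 2 < 3 := by
    rw [hnb, div_lt_iff₀ (mul_pos hQ0 (pow_pos (pow_pos hq1 m) 2))]
    linarith [hkey]
  refine ⟨goal1, ?_⟩
  have h2 : (n / b) ^ 2 = n / b ^ 2 * n := by
    field_simp
  calc (n / b) ^ 2 = n / b ^ 2 * n := h2
    _ < 3 * n := mul_lt_mul_of_pos_right goal1 hn0
end

section
/- For all integers m ≥ 2 and q > 2, with n = q^{m²}·∏_{i=1}^{m}(q^{2i}-1)/gcd(2,q-1) and b = q^{m²}·(q-1)^m/gcd(2,q-1), one has n/b² ≤ 2·(q/(q-1)²)^m < 2. -/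
private lemma sum_two_mul_Icc (m : ℕ) : ∑ i ∈ Finset.Icc 1 m, 2 * i = m ^ 2 + m := by
  induction m with
  | zero => simp
  | succ k ih =>
    rw [Finset.sum_Icc_succ_top (by omega), ih]
    ring

theorem stmt_13 (m q : ℕ) (hm : 2 ≤ m) (hq : 2 < q) (n b : ℚ)
    (hn : n = (q : ℚ) ^ (m ^ 2) *
      (∏ i ∈ Finset.Icc 1 m, ((q : ℚ) ^ (2 * i) - 1)) / (Nat.gcd 2 (q - 1)))
    (hb : b = (q : ℚ) ^ (m ^ 2) * ((q : ℚ) - 1) ^ m / (Nat.gcd 2 (q - 1))) :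
    n / b ^ 2 ≤ 2 * ((q : ℚ) / ((q : ℚ) - 1) ^ 2) ^ m ∧
      2 * ((q : ℚ) / ((q : ℚ) - 1) ^ 2) ^ m < 2 := by
  set Q : ℚ := (q : ℚ) with hQdef
  have hQ3 : (3 : ℚ) ≤ Q := by
    have : (3:ℕ) ≤ q := hq
    rw [hQdef]; exact_mod_cast this
  have hQ0 : (0 : ℚ) < Q := by linarith
  have hQ1 : (0 : ℚ) < Q - 1 := by linarith
  set d : ℚ := ((Nat.gcd 2 (q - 1) : ℕ) : ℚ) with hddef
  have hd1 : (1 : ℚ) ≤ d := by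
    have : 1 ≤ Nat.gcd 2 (q - 1) := Nat.one_le_iff_ne_zero.mpr (by
      simp [Nat.gcd_eq_zero_iff])
    rw [hddef]; exact_mod_cast this
  have hd2 : d ≤ 2 := by
    have : Nat.gcd 2 (q - 1) ≤ 2 := Nat.le_of_dvd (by norm_num) (Nat.gcd_dvd_left _ _)
    rw [hddef]; exact_mod_cast this
  have hd0 : (0 : ℚ) < d := lt_of_lt_of_le one_pos hd1
  set P : ℚ := ∏ i ∈ Finset.Icc 1 m, (Q ^ (2 * i) - 1) with hPdef
  have hPle : P ≤ Q ^ (m ^ 2 + m) := by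
    have : P ≤ ∏ i ∈ Finset.Icc 1 m, Q ^ (2 * i) := by
      apply Finset.prod_le_prod
      · intro i hi
        have hi1 : 1 ≤ i := (Finset.mem_Icc.mp hi).1
        have : Q ^ 1 ≤ Q ^ (2 * i) := pow_le_pow_right₀ (by linarith) (by omega)
        simp at this
        linarith
      · intro i _
        linarith [pow_pos hQ0 (2 * i)]
    calc P ≤ ∏ i ∈ Finset.Icc 1 m, Q ^ (2 * i) := this
      _ = Q ^ (∑ i ∈ Finset.Icc 1 m, 2 * i) := by
          rw [Finset.prod_pow_eq_pow_sum]
      _ = Q ^ (m ^ 2 + m) := by rw [sum_two_mul_Icc]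
  have hP0 : (0 : ℚ) < P := by
    apply Finset.prod_pos
    intro i hi
    have hi1 : 1 ≤ i := (Finset.mem_Icc.mp hi).1
    have : Q ^ 1 ≤ Q ^ (2 * i) := pow_le_pow_right₀ (by linarith) (by omega)
    simp at this
    linarith
  have hkey : n / b ^ 2 = d * P / (Q ^ (m ^ 2) * (Q - 1) ^ (2 * m)) := by
    rw [hn, hb]
    have h1 : Q ≠ 0 := ne_of_gt hQ0
    have h2 : Q - 1 ≠ 0 := ne_of_gt hQ1
    have h3 : d ≠ 0 := ne_of_gt hd0
    field_simp
    ring_nf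
  have hrhs : 2 * (Q / (Q - 1) ^ 2) ^ m =
      2 * Q ^ (m ^ 2 + m) / (Q ^ (m ^ 2) * (Q - 1) ^ (2 * m)) := by
    have h1 : Q ≠ 0 := ne_of_gt hQ0
    have h2 : Q - 1 ≠ 0 := ne_of_gt hQ1
    rw [div_pow, ← pow_mul, mul_comm 2 m, pow_add]
    field_simp
  constructor
  · rw [hkey, hrhs]
    apply div_le_div_of_nonneg_right ?_ (by positivity) |>.trans_eq rfl
    calc d * P ≤ 2 * P := by nlinarith
      _ ≤ 2 * Q ^ (m ^ 2 + m) := by linarith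
  · have hlt : Q / (Q - 1) ^ 2 < 1 := by
      rw [div_lt_one (by positivity)]
      nlinarith
    have hnn : (0 : ℚ) ≤ Q / (Q - 1) ^ 2 := by positivity
    have hm0 : m ≠ 0 := by omega
    have := pow_lt_one₀ hnn hlt hm0
    linarith
end
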